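/- Let K/F be a cyclic Galois field extension of degree n with Gal(K/F) = ⟨σ⟩ and norm N_{K/F}, and let f(t) = t^m − Σ_{i=0}^{m−1} a_i t^i ∈ K[t;σ] be not invariant. Then every F-algebra automorphism of S_f of the form H_{id,k} with N_{K/F}(k) = 1 is an inner automorphism of S_f. Moreover, if n ≥ m−1 and a_{m−1} ≠ 0, or if n = m, a_i = 0 for all i ≠ 0 and a_0 ∈ K∖F, then these inner automorphisms are exactly the automorphisms of S_f that restrict to the identity on K. -/

import Mathlib

/-! ## The Petit algebra `S_f = K[t;σ]/K[t;σ]f`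

For a twisted polynomial ring `R = K[t;σ]` (multiplication determined by `t·a = σ(a)·t`)
and the monic skew polynomial `f(t) = t^m - Σ_{i<m} a_i t^i` (encoded by its coefficient
vector `a : Fin m → K`), the Petit algebra `S_f` is realised on coefficient vectors
`Fin m → K` (the polynomials of degree `< m`), with multiplication `g ∘ h = (gh) mod_r f`. -/

/-- The remainder of `t^s` after right division by `f(t) = t^m - Σ_{i<m} a_i t^i`:
for `s < m` it is `t^s` itself, and for `s ≥ m` one uses
`t^s ≡ Σ_i σ^{s-m}(a_i) t^{s-m+i} (mod R·f)`. -/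
noncomputable def tred {K : Type*} [Field K] (σ : K → K) (m : ℕ) (a : Fin m → K) (s : ℕ) :
    Fin m → K :=
  if _h : s < m then (fun i => if (i : ℕ) = s then (1 : K) else 0)
  else ∑ i : Fin m, σ^[s - m] (a i) • tred σ m a (s - m + (i : ℕ))
termination_by s
decreasing_by
  have hi := i.isLt
  omega

/-- The multiplication `g ∘ h = (gh) mod_r f` of the Petit algebra `S_f`. -/
noncomputable def pmul {K : Type*} [Field K] (σ : K → K) {m : ℕ} (a : Fin m → K)
    (x y : Fin m → K) : Fin m → K :=
  ∑ i : Fin m, ∑ j : Fin m, (x i * σ^[(i : ℕ)] (y j)) • tred σ m a ((i : ℕ) + (j : ℕ))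

/-- The unit element `1` of `S_f`. -/
noncomputable def pone (K : Type*) [Field K] (m : ℕ) : Fin m → K :=
  fun i => if (i : ℕ) = 0 then 1 else 0

/-- The element `t` of `S_f`. -/
noncomputable def tvec (K : Type*) [Field K] (m : ℕ) : Fin m → K :=
  fun i => if (i : ℕ) = 1 then 1 else 0

/-- The canonical copy of `c ∈ K` inside `S_f`. -/
noncomputable def iota (K : Type*) [Field K] (m : ℕ) (c : K) : Fin m → K :=
  fun i => if (i : ℕ) = 0 then c else 0

/-- `S_f` is associative; by Petit's theorem this holds if and only if `f` is
invariant (i.e. `R·f` is a two-sided ideal of `R = K[t;σ]`). -/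
def PAssoc {K : Type*} [Field K] (σ : K → K) {m : ℕ} (a : Fin m → K) : Prop :=
  ∀ x y z : Fin m → K, pmul σ a (pmul σ a x y) z = pmul σ a x (pmul σ a y z)

/-- `H` is an automorphism of the algebra `S_f` over `F = Fix(σ)`: an `F`-linear
bijection preserving the multiplication and the unit. -/
structure IsPetitAut {K : Type*} [Field K] (σ : K → K) {m : ℕ} (a : Fin m → K)
    (H : (Fin m → K) → (Fin m → K)) : Prop where
  bijective : Function.Bijective H
  map_add : ∀ x y, H (x + y) = H x + H y
  map_smul : ∀ c : K, σ c = c → ∀ x, H (c • x) = c • H x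
  map_mul : ∀ x y, H (pmul σ a x y) = pmul σ a (H x) (H y)
  map_one : H (pone K m) = pone K m

/-- `H` is an inner automorphism `x ↦ (c_l ∘ x) ∘ c` of `S_f`, where `c_l` is a
left inverse of `c`. -/
def IsInnerPetit {K : Type*} [Field K] (σ : K → K) {m : ℕ} (a : Fin m → K)
    (H : (Fin m → K) → (Fin m → K)) : Prop :=
  ∃ c cl : Fin m → K, pmul σ a cl c = pone K m ∧
    ∀ x, H x = pmul σ a (pmul σ a cl x) c

/-- The map `H_{τ,k} : Σ x_i t^i ↦ τ(x_0) + Σ_{i≥1} τ(x_i)·(Π_{l<i} σ^l(k))·t^i`. -/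
noncomputable def Hmap {K : Type*} [Field K] (σ τ : K → K) {m : ℕ} (k : K)
    (x : Fin m → K) : Fin m → K :=
  fun i => τ (x i) * ∏ l ∈ Finset.range (i : ℕ), σ^[l] k

section Helpers
variable {K : Type*} [Field K]

/-- basis vector indexed by a natural number -/
noncomputable def ebas (K : Type*) [Field K] (m : ℕ) (p : ℕ) : Fin m → K :=
  fun i => if (i : ℕ) = p then 1 else 0

lemma tred_lt (σ : K → K) {m : ℕ} (a : Fin m → K) {s : ℕ} (hs : s < m) :
    tred σ m a s = ebas K m s := by
  rw [tred, dif_pos hs]; rfl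

lemma tred_ge (σ : K → K) {m : ℕ} (a : Fin m → K) {s : ℕ} (hs : m ≤ s) :
    tred σ m a s = ∑ i : Fin m, σ^[s - m] (a i) • tred σ m a (s - m + (i : ℕ)) := by
  rw [tred, dif_neg (by omega)]

lemma sum_ebas {m : ℕ} (x : Fin m → K) : x = ∑ j : Fin m, x j • ebas K m (j : ℕ) := by
  funext i
  simp only [Finset.sum_apply, Pi.smul_apply, ebas, smul_eq_mul, Fin.val_eq_val,
    mul_ite, mul_one, mul_zero]
  rw [Finset.sum_ite_eq Finset.univ i x]
  simp

lemma iter_zero (σ : K → K) (h0 : σ 0 = 0) (i : ℕ) : σ^[i] 0 = 0 := by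
  induction i with
  | zero => rfl
  | succ i ih => rw [Function.iterate_succ_apply, h0, ih]

lemma pmul_smul_ebas (σ : K → K) (h0 : σ 0 = 0) {m : ℕ} (a : Fin m → K)
    (c d : K) (p q : Fin m) :
    pmul σ a (c • ebas K m (p : ℕ)) (d • ebas K m (q : ℕ))
      = (c * σ^[(p : ℕ)] d) • tred σ m a ((p : ℕ) + (q : ℕ)) := by
  unfold pmul
  rw [Finset.sum_eq_single p]
  · rw [Finset.sum_eq_single q]
    · simp [ebas]
    · intro j _ hj
      have : (d • ebas K m (q : ℕ)) j = 0 := by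
        simp [ebas, Fin.val_eq_val, hj]
      rw [this, iter_zero σ h0, mul_zero, zero_smul]
    · simp
  · intro i _ hi
    have : (c • ebas K m (p : ℕ)) i = 0 := by
      simp [ebas, Fin.val_eq_val, hi]
    rw [this]
    simp
  · simp

end Helpers

section Lin
variable {K : Type*} [Field K] (σ : K → K) {m : ℕ} (a : Fin m → K)

lemma pmul_smul_left (c : K) (x y : Fin m → K) :
    pmul σ a (c • x) y = c • pmul σ a x y := by
  unfold pmul
  rw [Finset.smul_sum]
  refine Finset.sum_congr rfl fun i _ => ?_
  rw [Finset.smul_sum]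
  refine Finset.sum_congr rfl fun j _ => ?_
  simp only [Pi.smul_apply, smul_eq_mul, mul_assoc, mul_smul]

lemma pmul_add_left (x x' y : Fin m → K) :
    pmul σ a (x + x') y = pmul σ a x y + pmul σ a x' y := by
  unfold pmul
  rw [← Finset.sum_add_distrib]
  refine Finset.sum_congr rfl fun i _ => ?_
  rw [← Finset.sum_add_distrib]
  refine Finset.sum_congr rfl fun j _ => ?_
  simp [add_mul, add_smul]

lemma pmul_zero_left (y : Fin m → K) : pmul σ a 0 y = 0 := by
  unfold pmul; simp

lemma pmul_sum_left {ι : Type*} (s : Finset ι) (g : ι → Fin m → K) (y : Fin m → K) :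
    pmul σ a (∑ i ∈ s, g i) y = ∑ i ∈ s, pmul σ a (g i) y := by
  classical
  induction s using Finset.induction with
  | empty => simp [pmul_zero_left]
  | insert _ _ hne ih => rw [Finset.sum_insert hne, pmul_add_left, ih, Finset.sum_insert hne]

lemma iter_id (hσ : ∀ c : K, σ c = c) (i : ℕ) (c : K) : σ^[i] c = c := by
  induction i with
  | zero => rfl
  | succ i ih => rw [Function.iterate_succ_apply', ih, hσ]

lemma pmul_smul_right (hσ : ∀ c : K, σ c = c) (c : K) (x y : Fin m → K) :
    pmul σ a x (c • y) = c • pmul σ a x y := by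
  unfold pmul
  rw [Finset.smul_sum]
  refine Finset.sum_congr rfl fun i _ => ?_
  rw [Finset.smul_sum]
  refine Finset.sum_congr rfl fun j _ => ?_
  simp only [Pi.smul_apply, smul_eq_mul, iter_id σ hσ, smul_smul]
  ring_nf

lemma pmul_add_right (hσ : ∀ c : K, σ c = c) (x y y' : Fin m → K) :
    pmul σ a x (y + y') = pmul σ a x y + pmul σ a x y' := by
  unfold pmul
  rw [← Finset.sum_add_distrib]
  refine Finset.sum_congr rfl fun i _ => ?_
  rw [← Finset.sum_add_distrib]
  refine Finset.sum_congr rfl fun j _ => ?_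
  simp only [Pi.add_apply, iter_id σ hσ, mul_add, add_smul]

lemma pmul_zero_right (hσ : ∀ c : K, σ c = c) (x : Fin m → K) : pmul σ a x 0 = 0 := by
  unfold pmul
  simp [iter_id σ hσ]

lemma pmul_sum_right (hσ : ∀ c : K, σ c = c) {ι : Type*} (s : Finset ι) (x : Fin m → K) (g : ι → Fin m → K) :
    pmul σ a x (∑ i ∈ s, g i) = ∑ i ∈ s, pmul σ a x (g i) := by
  classical
  induction s using Finset.induction with
  | empty => simp [pmul_zero_right σ a hσ]
  | insert _ _ hne ih => rw [Finset.sum_insert hne, pmul_add_right σ a hσ, ih, Finset.sum_insert hne]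

end Lin

section Assoc
variable {K : Type*} [Field K] (σ : K → K) {m : ℕ} (a : Fin m → K)

lemma pmul_tred_ebas (hσ : ∀ c : K, σ c = c) (s : ℕ) (q : Fin m) :
    pmul σ a (tred σ m a s) (ebas K m (q : ℕ)) = tred σ m a (s + (q : ℕ)) := by
  induction s using Nat.strong_induction_on with
  | _ s ih =>
    by_cases hs : s < m
    · rw [tred_lt σ a hs]
      have h := pmul_smul_ebas σ (hσ 0) a 1 1 ⟨s, hs⟩ q
      simp only [one_smul, iter_id σ hσ, mul_one, one_mul] at h
      exact h
    · push_neg at hs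
      rw [tred_ge σ a hs, pmul_sum_left]
      have harith : s + (q : ℕ) - m = s - m + (q : ℕ) := by omega
      rw [tred_ge σ a (by omega : m ≤ s + (q : ℕ)), harith]
      refine Finset.sum_congr rfl fun i _ => ?_
      rw [pmul_smul_left, ih (s - m + (i : ℕ)) (by have := i.isLt; omega),
        iter_id σ hσ, iter_id σ hσ,
        show s - m + (i:ℕ) + (q:ℕ) = s - m + (q:ℕ) + (i:ℕ) from by omega]

lemma pmul_tred_tred (hσ : ∀ c : K, σ c = c) (s s' : ℕ) :
    pmul σ a (tred σ m a s) (tred σ m a s') = tred σ m a (s + s') := by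
  induction s' using Nat.strong_induction_on with
  | _ s' ih =>
    by_cases hs : s' < m
    · rw [tred_lt σ a hs]
      exact pmul_tred_ebas σ a hσ s ⟨s', hs⟩
    · push_neg at hs
      rw [tred_ge σ a hs, pmul_sum_right σ a hσ]
      rw [tred_ge σ a (by omega : m ≤ s + s')]
      refine Finset.sum_congr rfl fun i _ => ?_
      rw [pmul_smul_right σ a hσ, ih (s' - m + (i : ℕ)) (by have := i.isLt; omega),
        iter_id σ hσ, iter_id σ hσ,
        show s + (s' - m + (i:ℕ)) = s + s' - m + (i:ℕ) from by omega]

lemma pmul_expand (x y : Fin m → K) :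
    pmul σ a x y
      = ∑ i : Fin m, ∑ j : Fin m, (x i * σ^[(i:ℕ)] (y j)) • tred σ m a ((i:ℕ) + (j:ℕ)) := rfl

lemma passoc_of_id (hσ : ∀ c : K, σ c = c) :
    ∀ x y z : Fin m → K, pmul σ a (pmul σ a x y) z = pmul σ a x (pmul σ a y z) := by
  intro x y z
  have key2 : ∀ i j q : Fin m,
      pmul σ a (pmul σ a (x i • ebas K m (i:ℕ)) (y j • ebas K m (j:ℕ))) (z q • ebas K m (q:ℕ))
        = (x i * y j * z q) • tred σ m a ((i:ℕ) + (j:ℕ) + (q:ℕ)) := by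
    intro i j q
    rw [pmul_smul_ebas σ (hσ 0) a, pmul_smul_left, pmul_smul_right σ a hσ,
      show ebas K m (q:ℕ) = tred σ m a (q:ℕ) from (tred_lt σ a q.isLt).symm,
      pmul_tred_tred σ a hσ, smul_smul]
    simp only [iter_id σ hσ]
    try rfl
    try (congr 1 <;> ring)
  have key3 : ∀ i j q : Fin m,
      pmul σ a (x i • ebas K m (i:ℕ)) (pmul σ a (y j • ebas K m (j:ℕ)) (z q • ebas K m (q:ℕ)))
        = (x i * y j * z q) • tred σ m a ((i:ℕ) + (j:ℕ) + (q:ℕ)) := by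
    intro i j q
    rw [pmul_smul_ebas σ (hσ 0) a, pmul_smul_right σ a hσ, pmul_smul_left,
      show ebas K m (i:ℕ) = tred σ m a (i:ℕ) from (tred_lt σ a i.isLt).symm,
      pmul_tred_tred σ a hσ, smul_smul]
    simp only [iter_id σ hσ]
    rw [← add_assoc]
    try rfl
    try (congr 1 <;> ring)
  conv_lhs => rw [sum_ebas x, sum_ebas y, sum_ebas z]
  conv_rhs => rw [sum_ebas x, sum_ebas y, sum_ebas z]
  simp only [pmul_sum_left, pmul_sum_right σ a hσ]
  simp only [key2, key3]

end Assoc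

section OneSide
variable {K : Type*} [Field K] (σ : K → K) {m : ℕ} (a : Fin m → K)

lemma pmul_ebas_left (c : K) (p : Fin m) (y : Fin m → K) :
    pmul σ a (c • ebas K m (p : ℕ)) y
      = ∑ j : Fin m, (c * σ^[(p : ℕ)] (y j)) • tred σ m a ((p : ℕ) + (j : ℕ)) := by
  unfold pmul
  rw [Finset.sum_eq_single p]
  · simp [ebas]
  · intro i _ hi
    have : (c • ebas K m (p : ℕ)) i = 0 := by simp [ebas, Fin.val_eq_val, hi]
    rw [this]; simp
  · simp

lemma pmul_ebas_right (h0 : σ 0 = 0) (d : K) (q : Fin m) (x : Fin m → K) :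
    pmul σ a x (d • ebas K m (q : ℕ))
      = ∑ i : Fin m, (x i * σ^[(i : ℕ)] d) • tred σ m a ((i : ℕ) + (q : ℕ)) := by
  unfold pmul
  refine Finset.sum_congr rfl fun i _ => ?_
  rw [Finset.sum_eq_single q]
  · simp [ebas]
  · intro j _ hj
    have : (d • ebas K m (q : ℕ)) j = 0 := by simp [ebas, Fin.val_eq_val, hj]
    rw [this, iter_zero σ h0, mul_zero, zero_smul]
  · simp

end OneSide

section Iota2
variable {K : Type*} [Field K] (σ : K → K) {m : ℕ} (a : Fin m → K)

lemma iota_eq {m : ℕ} (hm : 0 < m) (c : K) :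
    iota K m c = c • ebas K m ((⟨0, hm⟩ : Fin m) : ℕ) := by
  funext i
  simp [iota, ebas, mul_ite]

lemma pmul_iota_left (hm : 0 < m) (c : K) (x : Fin m → K) :
    pmul σ a (iota K m c) x = c • x := by
  rw [iota_eq hm, pmul_ebas_left]
  conv_rhs => rw [sum_ebas x, Finset.smul_sum]
  refine Finset.sum_congr rfl fun j _ => ?_
  have h1 : ((⟨0, hm⟩ : Fin m) : ℕ) + (j : ℕ) = (j : ℕ) := by simp
  rw [h1, tred_lt σ a j.isLt, smul_smul]
  simp

lemma pmul_iota_right (h0 : σ 0 = 0) (hm : 0 < m) (c : K) (x : Fin m → K) :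
    pmul σ a x (iota K m c) = fun i => x i * σ^[(i : ℕ)] c := by
  rw [iota_eq hm, pmul_ebas_right σ a h0]
  conv_rhs => rw [sum_ebas (fun i => x i * σ^[(i : ℕ)] c)]
  refine Finset.sum_congr rfl fun i _ => ?_
  have h1 : (i : ℕ) + ((⟨0, hm⟩ : Fin m) : ℕ) = (i : ℕ) := by simp
  rw [h1, tred_lt σ a i.isLt]

lemma pmul_iota_iota (hm : 0 < m) (u v : K) :
    pmul σ a (iota K m u) (iota K m v) = iota K m (u * v) := by
  rw [pmul_iota_left σ a hm]
  funext i
  simp [iota, mul_ite]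

lemma pone_eq_iota : pone K m = iota K m 1 := by
  funext i; simp [pone, iota]

lemma pmul_conj (h0 : σ 0 = 0) (hm : 0 < m) (u v : K) (x : Fin m → K) :
    pmul σ a (pmul σ a (iota K m u) x) (iota K m v)
      = fun i => u * x i * σ^[(i : ℕ)] v := by
  rw [pmul_iota_left σ a hm, pmul_iota_right σ a h0 hm]
  funext i
  simp [mul_assoc]

end Iota2

section Galois
variable {F K : Type*} [Field F] [Field K] [Algebra F K]
  [FiniteDimensional F K] [IsGalois F K]
  (n : ℕ) (σ : K ≃ₐ[F] K)

lemma coe_pow_iter (j : ℕ) (c : K) : (⇑σ)^[j] c = (σ ^ j) c := by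
  induction j with
  | zero => simp
  | succ j ih => rw [Function.iterate_succ_apply', ih, pow_succ', AlgEquiv.mul_apply]

variable (hdeg : Module.finrank F K = n)
  (hgen : ∀ τ : K ≃ₐ[F] K, ∃ j : ℕ, τ = σ ^ j)

include hdeg hgen in
lemma horder : orderOf σ = n := by
  have hz : ∀ τ : K ≃ₐ[F] K, τ ∈ Subgroup.zpowers σ := by
    intro τ
    obtain ⟨j, rfl⟩ := hgen τ
    exact Subgroup.pow_mem (Subgroup.zpowers σ) (Subgroup.mem_zpowers σ) j
  have h1 : orderOf σ = Nat.card (K ≃ₐ[F] K) :=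
    orderOf_eq_card_of_forall_mem_zpowers hz
  rw [h1, IsGalois.card_aut_eq_finrank, hdeg]

include hdeg hgen in
lemma sigma_pow_bij : Function.Bijective (fun l : Fin n => σ ^ (l : ℕ)) := by
  rw [Fintype.bijective_iff_injective_and_card]
  constructor
  · intro i j hij
    have h := pow_injOn_Iio_orderOf (x := σ)
      (by rw [horder n σ hdeg hgen]; exact i.isLt)
      (by rw [horder n σ hdeg hgen]; exact j.isLt) hij
    exact Fin.ext h
  · rw [Fintype.card_fin, ← Nat.card_eq_fintype_card, IsGalois.card_aut_eq_finrank, hdeg]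

include hdeg hgen in
lemma norm_prod' (k : K) :
    algebraMap F K (Algebra.norm F k) = ∏ l ∈ Finset.range n, (⇑σ)^[l] k := by
  rw [Algebra.norm_eq_prod_automorphisms,
    ← Fintype.prod_bijective _ (sigma_pow_bij n σ hdeg hgen) _ _ (fun l => rfl),
    Finset.prod_range (fun l => (⇑σ)^[l] k)]
  exact Finset.prod_congr rfl fun l _ => by rw [coe_pow_iter]

end Galois

section Galois
variable {F K : Type*} [Field F] [Field K] [Algebra F K]
  [FiniteDimensional F K] [IsGalois F K]
  (n : ℕ) (σ : K ≃ₐ[F] K)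

lemma coe_pow_iter' (j : ℕ) (c : K) : (⇑σ)^[j] c = (σ ^ j) c := by
  induction j with
  | zero => simp
  | succ j ih => rw [Function.iterate_succ_apply', ih, pow_succ', AlgEquiv.mul_apply]

variable (hdeg : Module.finrank F K = n)
  (hgen : ∀ τ : K ≃ₐ[F] K, ∃ j : ℕ, τ = σ ^ j)
  (horder' : orderOf σ = n)
  (hnormprod : ∀ k : K, algebraMap F K (Algebra.norm F k)
      = ∏ l ∈ Finset.range n, (⇑σ)^[l] k)

include hdeg horder' hnormprod in
lemma hilbert90_cyclic (k : K) (hk : k ≠ 0) (hNk : Algebra.norm F k = 1) :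
    ∃ ε : K, ε ≠ 0 ∧ k * σ ε = ε := by
  classical
  set D : ℕ → K := fun j => ∏ l ∈ Finset.range j, (⇑σ)^[l] k with hD
  have hD0 : D 0 = 1 := by simp [hD]
  have hn : 0 < n := by
    rw [← hdeg]; exact Module.finrank_pos
  have hDn : D n = 1 := by
    rw [hD]
    simp only
    rw [← hnormprod k, hNk, map_one]
  have indep : LinearIndependent K (fun j : Fin n => (⇑(σ ^ (j : ℕ)) : K → K)) := by
    have h := linearIndependent_monoidHom K K
    have hinj : Function.Injective
        (fun j : Fin n => ((σ ^ (j : ℕ) : K ≃ₐ[F] K) : K →* K)) := by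
      intro i j hij
      have h2 : (σ ^ (i : ℕ) : K ≃ₐ[F] K) = σ ^ (j : ℕ) := by
        ext x
        exact DFunLike.congr_fun hij x
      have h3 := pow_injOn_Iio_orderOf (x := σ)
        (by rw [horder']; exact i.isLt) (by rw [horder']; exact j.isLt) h2
      exact Fin.ext h3
    have h2 := h.comp (fun j : Fin n => ((σ ^ (j : ℕ) : K ≃ₐ[F] K) : K →* K)) hinj
    have h3 : ((fun f : K →* K => (⇑f : K → K)) ∘
        fun j : Fin n => ((σ ^ (j : ℕ) : K ≃ₐ[F] K) : K →* K))
        = fun j : Fin n => (⇑(σ ^ (j : ℕ)) : K → K) := by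
      funext j
      ext x
      simp
    rwa [h3] at h2
  -- nonvanishing of the character sum
  obtain ⟨z, hz⟩ : ∃ z : K, ∑ j ∈ Finset.range n, D j * (⇑σ)^[j] z ≠ 0 := by
    by_contra hcon
    push_neg at hcon
    have hsum : ∑ j : Fin n, D (j : ℕ) • (⇑(σ ^ (j : ℕ)) : K → K) = 0 := by
      funext z
      have hcz := hcon z
      rw [Finset.sum_range (fun j => D j * (⇑σ)^[j] z)] at hcz
      simp only [coe_pow_iter'] at hcz
      simpa using hcz
    have hzero := Fintype.linearIndependent_iff.1 indep (fun j => D (j : ℕ)) hsum ⟨0, hn⟩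
    rw [hD0] at hzero
    exact one_ne_zero hzero
  refine ⟨∑ j ∈ Finset.range n, D j * (⇑σ)^[j] z, hz, ?_⟩
  have hterm : ∀ j, k * σ (D j * (⇑σ)^[j] z) = D (j + 1) * (⇑σ)^[j + 1] z := by
    intro j
    rw [map_mul]
    have h1 : σ (D j) * k = D (j + 1) := by
      rw [hD]
      simp only
      rw [map_prod, Finset.prod_range_succ']
      congr 1
      exact Finset.prod_congr rfl fun l _ =>
        (Function.iterate_succ_apply' σ l k).symm
    rw [← h1, Function.iterate_succ_apply']
    ring
  rw [map_sum, Finset.mul_sum]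
  have hshift : ∑ j ∈ Finset.range n, (k * σ (D j * (⇑σ)^[j] z))
      = ∑ j ∈ Finset.range n, (fun j => D j * (⇑σ)^[j] z) (j + 1) := by
    exact Finset.sum_congr rfl fun j _ => hterm j
  calc ∑ j ∈ Finset.range n, k * σ (D j * (⇑σ)^[j] z)
      = ∑ j ∈ Finset.range n, (fun j => D j * (⇑σ)^[j] z) (j + 1) := hshift
    _ = ∑ j ∈ Finset.range (n + 1), (fun j => D j * (⇑σ)^[j] z) j
          - (fun j => D j * (⇑σ)^[j] z) 0 := by
        rw [Finset.sum_range_succ' (fun j => D j * (⇑σ)^[j] z) n]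
        ring
    _ = ∑ j ∈ Finset.range n, D j * (⇑σ)^[j] z := by
        rw [Finset.sum_range_succ]
        have h2 : (⇑σ)^[n] z = z := by
          rw [coe_pow_iter', ← horder', pow_orderOf_eq_one]
          rfl
        simp [hD0, h2, hDn]

end Galois

section MoreHelpers
variable {K : Type*} [Field K]

lemma iter_mul (σ : K → K) (hmul : ∀ x y : K, σ (x * y) = σ x * σ y) (i : ℕ) (x y : K) :
    σ^[i] (x * y) = σ^[i] x * σ^[i] y := by
  induction i with
  | zero => rfl
  | succ i ih => rw [Function.iterate_succ_apply', ih, hmul,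
      Function.iterate_succ_apply', Function.iterate_succ_apply']

lemma pone_eq_ebas (m : ℕ) : pone K m = ebas K m 0 := rfl

lemma tvec_eq_ebas (m : ℕ) : tvec K m = ebas K m 1 := rfl

lemma pmul_smul_ebas' (σ : K → K) (h0 : σ 0 = 0) {m : ℕ} (a : Fin m → K)
    (c d : K) (p q : ℕ) (hp : p < m) (hq : q < m) :
    pmul σ a (c • ebas K m p) (d • ebas K m q)
      = (c * σ^[p] d) • tred σ m a (p + q) :=
  pmul_smul_ebas σ h0 a c d ⟨p, hp⟩ ⟨q, hq⟩

lemma tred_m_eq (σ : K → K) {m : ℕ} (a : Fin m → K) (hm : 0 < m) :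
    tred σ m a m = a := by
  rw [tred_ge σ a (le_refl m)]
  have h1 : ∀ i : Fin m, σ^[m - m] (a i) • tred σ m a (m - m + (i : ℕ))
      = a i • ebas K m (i : ℕ) := by
    intro i
    rw [Nat.sub_self]
    simp only [Function.iterate_zero, id, zero_add]
    rw [tred_lt σ a i.isLt]
  rw [Finset.sum_congr rfl fun i _ => h1 i]
  exact (sum_ebas a).symm

end MoreHelpers

section GalHelpers
variable {F K : Type*} [Field F] [Field K] [Algebra F K] (σ : K ≃ₐ[F] K)

lemma prodP_succ (k : K) (j : ℕ) :
    k * σ (∏ l ∈ Finset.range j, (⇑σ)^[l] k) = ∏ l ∈ Finset.range (j + 1), (⇑σ)^[l] k := by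
  rw [map_prod, Finset.prod_range_succ']
  have h1 : ∀ l, σ ((⇑σ)^[l] k) = (⇑σ)^[l + 1] k := fun l =>
    (Function.iterate_succ_apply' σ l k).symm
  rw [Finset.prod_congr rfl fun l _ => h1 l]
  simp [mul_comm]

lemma telescope_prod (k ε : K) (hkε : k * σ ε = ε) (i : ℕ) :
    (∏ l ∈ Finset.range i, (⇑σ)^[l] k) * (⇑σ)^[i] ε = ε := by
  induction i with
  | zero => simp
  | succ i ih =>
    rw [Finset.prod_range_succ, Function.iterate_succ_apply']
    have h2 : (⇑σ)^[i] k * σ ((⇑σ)^[i] ε) = (⇑σ)^[i] ε := by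
      have h4 : σ ((⇑σ)^[i] ε) = (⇑σ)^[i] (σ ε) :=
        (Function.iterate_succ_apply' (⇑σ) i ε).symm.trans
          (Function.iterate_succ_apply (⇑σ) i ε)
      rw [h4, ← iter_mul (⇑σ) (map_mul σ) i, hkε]
    calc (∏ l ∈ Finset.range i, (⇑σ)^[l] k) * (⇑σ)^[i] k * σ ((⇑σ)^[i] ε)
        = (∏ l ∈ Finset.range i, (⇑σ)^[l] k) * ((⇑σ)^[i] k * σ ((⇑σ)^[i] ε)) := by ring
      _ = (∏ l ∈ Finset.range i, (⇑σ)^[l] k) * (⇑σ)^[i] ε := by rw [h2]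
      _ = ε := ih

lemma iter_inv (x : K) (i : ℕ) : (⇑σ)^[i] x⁻¹ = ((⇑σ)^[i] x)⁻¹ := by
  induction i with
  | zero => rfl
  | succ i ih =>
    rw [Function.iterate_succ_apply', Function.iterate_succ_apply', ih, map_inv₀]

lemma iter_ne_zero (k : K) (hk : k ≠ 0) (l : ℕ) : (⇑σ)^[l] k ≠ 0 := by
  induction l with
  | zero => exact hk
  | succ l ih =>
    rw [Function.iterate_succ_apply']
    exact fun h => ih (σ.injective (by simpa using h))

end GalHelpers


/-- **Theorem 4.2.** Let `K/F` be a cyclic Galois field extension of degree `n` with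
`Gal(K/F) = ⟨σ⟩` and norm `N_{K/F}`, and let `f(t) = t^m − Σ_{i<m} a_i t^i` be not
invariant (equivalently `S_f` not associative).
(i) Every automorphism `H_{id,k} ∈ Aut_F(S_f)` with `N_{K/F}(k) = 1` is inner.
(ii) If `n ≥ m−1` and `a_{m−1} ≠ 0`, or if `n = m`, `a_i = 0` for `i ≠ 0` and
`a₀ ∈ K∖F`, then these are exactly the automorphisms restricting to `id` on `K`. -/
theorem stmt13 {F K : Type*} [Field F] [Field K] [Algebra F K]
    [FiniteDimensional F K] [IsGalois F K]
    (n : ℕ) (hdeg : Module.finrank F K = n)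
    (σ : K ≃ₐ[F] K) (hgen : ∀ τ : K ≃ₐ[F] K, ∃ j : ℕ, τ = σ ^ j)
    (m : ℕ) (hm : 2 ≤ m) (a : Fin m → K)
    (hna : ¬ PAssoc (⇑σ) a) :
    (∀ k : K, k ≠ 0 → Algebra.norm F k = 1 →
      IsPetitAut (⇑σ) a (Hmap (⇑σ) (id : K → K) k) →
      IsInnerPetit (⇑σ) a (Hmap (⇑σ) (id : K → K) k))
    ∧ (((m - 1 ≤ n ∧ a ⟨m - 1, by omega⟩ ≠ 0) ∨
        (n = m ∧ (∀ i : Fin m, (i : ℕ) ≠ 0 → a i = 0) ∧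
          a ⟨0, by omega⟩ ∉ Set.range (algebraMap F K))) →
      ∀ H : (Fin m → K) → (Fin m → K), IsPetitAut (⇑σ) a H →
        ((∀ c : K, H (iota K m c) = iota K m c) ↔
          ∃ k : K, k ≠ 0 ∧ Algebra.norm F k = 1 ∧ H = Hmap (⇑σ) (id : K → K) k)) := by
  have m0 : 0 < m := by omega
  have m1 : 1 < m := by omega
  have hord : orderOf σ = n := horder n σ hdeg hgen
  constructor
  · -- part (i)
    intro k hk hNk _haut
    obtain ⟨ε, hε, hkε⟩ := hilbert90_cyclic n σ hdeg hord
      (fun k' => norm_prod' n σ hdeg hgen k') k hk hNk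
    refine ⟨iota K m ε⁻¹, iota K m ε, ?_, ?_⟩
    · rw [pmul_iota_iota (⇑σ) a m0, mul_inv_cancel₀ hε]
      exact (pone_eq_iota (K := K) (m := m)).symm
    · intro x
      rw [pmul_conj (⇑σ) a (map_zero σ) m0]
      funext i
      simp only [Hmap, id_eq]
      have htel := telescope_prod σ k ε hkε (i : ℕ)
      have hne : (⇑σ)^[(i : ℕ)] ε ≠ 0 := iter_ne_zero σ ε hε (i : ℕ)
      have hinv : (⇑σ)^[(i : ℕ)] ε⁻¹ = ((⇑σ)^[(i : ℕ)] ε)⁻¹ := iter_inv σ ε (i : ℕ)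
      rw [hinv]
      field_simp
      linear_combination x i * htel
  · -- part (ii)
    rintro hcase H hH
    have hn1 : 0 < n := by rw [← hdeg]; exact Module.finrank_pos
    have hn2 : 2 ≤ n := by
      by_contra hcon
      have hn : n = 1 := by omega
      have hσid : ∀ c : K, σ c = c := by
        intro c
        have hbot : (⊥ : Subalgebra F K) = ⊤ :=
          Subalgebra.bot_eq_top_of_finrank_eq_one (by rw [hdeg, hn])
        have hc : c ∈ (⊥ : Subalgebra F K) := by rw [hbot]; trivial
        obtain ⟨y, rfl⟩ := hc
        exact σ.commutes y
      exact hna (passoc_of_id (⇑σ) a hσid)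
    have hm1n : m - 1 ≤ n := by
      rcases hcase with ⟨h1, _⟩ | ⟨h1, _⟩
      · exact h1
      · omega
    have H0 : H 0 = 0 := by
      have h := hH.map_add 0 0
      simp only [add_zero] at h
      exact left_eq_add.mp h
    constructor
    · intro hfix
      set b := H (tvec K m) with hbdef
      have hb : ∀ (c : K) (i : Fin m), b i * (⇑σ)^[(i : ℕ)] c = σ c * b i := by
        intro c i
        have e1 : pmul (⇑σ) a (tvec K m) (iota K m c)
            = pmul (⇑σ) a (iota K m (σ c)) (tvec K m) := by
          rw [pmul_iota_right (⇑σ) a (map_zero σ) m0, pmul_iota_left (⇑σ) a m0]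
          funext j
          by_cases hj : (j : ℕ) = 1
          · simp [tvec, hj]
          · simp [tvec, hj]
        have e2 := congrArg H e1
        rw [hH.map_mul, hH.map_mul, hfix c, hfix (σ c)] at e2
        rw [pmul_iota_right (⇑σ) a (map_zero σ) m0, pmul_iota_left (⇑σ) a m0,
          ← hbdef] at e2
        have h3 := congrFun e2 i
        simpa using h3
      have hb0 : ∀ i : Fin m, (i : ℕ) ≠ 1 → b i = 0 := by
        intro i hi
        by_contra hbne
        by_cases hiz : (i : ℕ) = 0
        · have hσne : ∃ c : K, σ c ≠ c := by
            by_contra hcon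
            push_neg at hcon
            have h1 : σ = 1 := AlgEquiv.ext hcon
            rw [h1, orderOf_one] at hord
            omega
          obtain ⟨c, hc⟩ := hσne
          have h := hb c i
          rw [hiz] at h
          simp only [Function.iterate_zero, id_eq] at h
          exact hc (mul_left_cancel₀ hbne (h.trans (mul_comm _ _))).symm
        · have h2i : 2 ≤ (i : ℕ) := by omega
          have hpow : ∃ c : K, (⇑σ)^[(i : ℕ)] c ≠ σ c := by
            by_contra hcon
            push_neg at hcon
            have hd : σ ^ ((i : ℕ) - 1) = 1 := by
              ext d
              have h4 := hcon (σ.symm d)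
              rw [show (i : ℕ) = ((i : ℕ) - 1) + 1 by omega,
                Function.iterate_succ_apply] at h4
              rw [AlgEquiv.apply_symm_apply] at h4
              rw [coe_pow_iter σ ((i : ℕ) - 1) d] at h4
              simpa using h4
            have hdvd := orderOf_dvd_of_pow_eq_one hd
            rw [hord] at hdvd
            have h5 : (i : ℕ) - 1 < n := by
              have := i.isLt
              omega
            have h6 : 0 < (i : ℕ) - 1 := by omega
            have := Nat.le_of_dvd h6 hdvd
            omega
          obtain ⟨c, hc⟩ := hpow
          have h := hb c i
          exact hc (mul_left_cancel₀ hbne (h.trans (mul_comm _ _)))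
      set k : K := b ⟨1, m1⟩ with hkdef
      have hbk : b = k • ebas K m 1 := by
        funext i
        by_cases hi : (i : ℕ) = 1
        · have hieq : i = ⟨1, m1⟩ := Fin.ext hi
          rw [hieq]
          simp [ebas]
          exact hkdef.symm
        · rw [hb0 i hi]
          simp [ebas, hi]
      have hk0 : k ≠ 0 := by
        intro hkz
        have hbz : b = 0 := by rw [hbk, hkz, zero_smul]
        have htz : tvec K m = 0 := hH.bijective.injective (by rw [← hbdef, hbz, H0])
        have h7 := congrFun htz ⟨1, m1⟩
        simp [tvec] at h7
      set P : ℕ → K := fun i => ∏ l ∈ Finset.range i, (⇑σ)^[l] k with hPdef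
      have hPne : ∀ i, P i ≠ 0 := fun i =>
        Finset.prod_ne_zero_iff.2 fun l _ => iter_ne_zero σ k hk0 l
      have Hsum : ∀ (g : Fin m → (Fin m → K)),
          H (∑ i : Fin m, g i) = ∑ i : Fin m, H (g i) := by
        intro g
        classical
        induction (Finset.univ : Finset (Fin m)) using Finset.induction with
        | empty => simpa using H0
        | insert _ _ hne ih =>
          rw [Finset.sum_insert hne, hH.map_add, ih, Finset.sum_insert hne]
      have hE : ∀ j : ℕ, j < m → H (ebas K m j) = P j • ebas K m j := by
        intro j
        induction j with
        | zero =>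
          intro _
          rw [← pone_eq_ebas, hH.map_one]
          simp [hPdef, pone_eq_ebas]
        | succ j ih =>
          intro hj1
          have hj : j < m := by omega
          have hrec : ebas K m (j + 1) = pmul (⇑σ) a (tvec K m) (ebas K m j) := by
            rw [tvec_eq_ebas]
            have h8 := pmul_smul_ebas' (⇑σ) (map_zero σ) a 1 1 1 j m1 hj
            rw [one_smul, one_smul] at h8
            rw [h8, show ((⇑σ)^[1] (1 : K)) = 1 by simp, mul_one,
              tred_lt (⇑σ) a (show 1 + j < m by omega), one_smul,
              show 1 + j = j + 1 by omega]
          rw [hrec, hH.map_mul, ← hbdef, hbk, ih hj,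
            pmul_smul_ebas' (⇑σ) (map_zero σ) a k (P j) 1 j m1 hj,
            tred_lt (⇑σ) a (show 1 + j < m by omega),
            show 1 + j = j + 1 by omega]
          congr 1
          rw [show ((⇑σ)^[1] (P j)) = σ (P j) from Function.iterate_one ⇑σ ▸ rfl]
          exact prodP_succ σ k j
      have hHk : H = Hmap (⇑σ) (id : K → K) k := by
        funext x
        calc H x = H (∑ j : Fin m, x j • ebas K m (j : ℕ)) := by rw [← sum_ebas x]
          _ = ∑ j : Fin m, H (x j • ebas K m (j : ℕ)) := Hsum _
          _ = ∑ j : Fin m, (x j * P (j : ℕ)) • ebas K m (j : ℕ) := by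
              refine Finset.sum_congr rfl fun j _ => ?_
              rw [show x j • ebas K m (j : ℕ)
                  = pmul (⇑σ) a (iota K m (x j)) (ebas K m (j : ℕ)) from
                  (pmul_iota_left (⇑σ) a m0 (x j) _).symm,
                hH.map_mul, hfix, hE (j : ℕ) j.isLt, pmul_iota_left (⇑σ) a m0,
                smul_smul]
          _ = Hmap (⇑σ) (id : K → K) k x :=
              (sum_ebas (Hmap (⇑σ) (id : K → K) k x)).symm
      have hHa : H a = P m • a := by
        have h1 : tred (⇑σ) m a m = pmul (⇑σ) a (tvec K m) (ebas K m (m - 1)) := by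
          rw [tvec_eq_ebas]
          have h8 := pmul_smul_ebas' (⇑σ) (map_zero σ) a 1 1 1 (m - 1) m1 (by omega)
          rw [one_smul, one_smul] at h8
          rw [h8, show ((⇑σ)^[1] (1 : K)) = 1 by simp, mul_one, one_smul,
            show 1 + (m - 1) = m by omega]
        have h2 : H (tred (⇑σ) m a m) = P m • tred (⇑σ) m a m := by
          conv_lhs => rw [h1]
          rw [hH.map_mul, ← hbdef, hbk, hE (m - 1) (by omega),
            pmul_smul_ebas' (⇑σ) (map_zero σ) a k (P (m - 1)) 1 (m - 1) m1 (by omega),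
            show 1 + (m - 1) = m by omega]
          congr 1
          rw [show ((⇑σ)^[1] (P (m - 1))) = σ (P (m - 1)) from Function.iterate_one ⇑σ ▸ rfl]
          have h9 := prodP_succ σ k (m - 1)
          rw [show m - 1 + 1 = m by omega] at h9
          exact h9
        rw [tred_m_eq (⇑σ) a m0] at h2
        exact h2
      have hHa2 : H a = fun i => a i * P (i : ℕ) := by
        rw [hHk]
        rfl
      refine ⟨k, hk0, ?_, hHk⟩
      rcases hcase with ⟨hmn, ham⟩ | ⟨hnm, hzero, ha0⟩
      · have heval := congrFun (hHa.symm.trans hHa2) ⟨m - 1, by omega⟩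
        simp only [Pi.smul_apply, smul_eq_mul] at heval
        have hPm : P m = P (m - 1) := by
          have h10 : P m * a ⟨m - 1, by omega⟩ = P (m - 1) * a ⟨m - 1, by omega⟩ := by
            rw [heval]; ring
          exact mul_right_cancel₀ ham h10
        have hσk : (⇑σ)^[m - 1] k = 1 := by
          have h11 := Finset.prod_range_succ (fun l => (⇑σ)^[l] k) (m - 1)
          rw [show m - 1 + 1 = m by omega] at h11
          have h12 : P m = P (m - 1) * (⇑σ)^[m - 1] k := h11
          rw [hPm] at h12
          have h13 : P (m - 1) * 1 = P (m - 1) * (⇑σ)^[m - 1] k := by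
            rw [mul_one]; exact h12
          exact (mul_left_cancel₀ (hPne (m - 1)) h13).symm
        have hk1 : k = 1 := by
          rw [coe_pow_iter σ (m - 1) k] at hσk
          have h13 : (σ ^ (m - 1)) k = (σ ^ (m - 1)) 1 := by
            rw [hσk, map_one]
          exact (σ ^ (m - 1)).injective h13
        rw [hk1]
        exact map_one (Algebra.norm F)
      · have haiota : a = iota K m (a ⟨0, m0⟩) := by
          funext i
          by_cases hi : (i : ℕ) = 0
          · have hieq : i = ⟨0, m0⟩ := Fin.ext hi
            rw [hieq]
            simp [iota]
          · rw [hzero i hi]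
            simp [iota, hi]
        have hfa : H a = a := by
          have h14 := hfix (a ⟨0, m0⟩)
          rw [← haiota] at h14
          exact h14
        have ha0ne : a ⟨0, m0⟩ ≠ 0 := fun h => ha0 ⟨0, by rw [map_zero, h]⟩
        have hPm1 : P m = 1 := by
          have heval := congrFun (hfa.symm.trans hHa) ⟨0, m0⟩
          simp only [Pi.smul_apply, smul_eq_mul] at heval
          have h15 : (1 : K) * a ⟨0, m0⟩ = P m * a ⟨0, m0⟩ := by
            rw [one_mul, ← heval]
          exact (mul_right_cancel₀ ha0ne h15).symm
        have hnorm := norm_prod' n σ hdeg hgen k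
        rw [hnm] at hnorm
        have h16 : algebraMap F K (Algebra.norm F k) = algebraMap F K 1 := by
          rw [hnorm, map_one]
          exact hPm1
        exact (algebraMap F K).injective h16
    · rintro ⟨k, hk, hNk, rfl⟩ c
      funext i
      by_cases hi : (i : ℕ) = 0
      · simp [Hmap, iota, hi]
      · simp [Hmap, iota, hi]
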